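/- Define Fibonacci polynomials by f_1(x) = 1, f_2(x) = x, f_{n+1}(x) = x·f_n(x) + f_{n-1}(x), and Lucas polynomials by ℓ_{n-1}(x) = f_n(x) + f_{n-2}(x). For n ≥ 3, the characteristic polynomial det(t·I_n − A) of the skew-symmetric matrix A with A_{1,3} = 1, A_{2,3} = 1, A_{i,i+1} = 1 for 3 ≤ i ≤ n-1 (and A_{j,i} = −A_{i,j}, all other entries 0) equals t·ℓ_{n-1}(t). -/

import Mathlib

/-!
Expand `det (t • 1 - A)` along the row of the leaf `0`, whose only neighbour is `2`.
Deleting vertex `0` leaves a path on `n - 1` vertices, and the characteristic polynomial of a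
path on `m` vertices is the continuant `f (m + 1)`. The term through the edge `0 — 2` deletes the
vertices `0` and `2`, leaving the isolated vertex `1` next to a path on `n - 3` vertices, and
contributes `t * f (n - 2)`. Hence the characteristic polynomial is `t * (f n + f (n - 2))`.
-/

open Polynomial Matrix

theorem Fin.val_succAbove {n : ℕ} (p : Fin (n + 1)) (j : Fin n) :
    (p.succAbove j : ℕ) = if (j : ℕ) < p then (j : ℕ) else (j : ℕ) + 1 := by
  unfold Fin.succAbove
  split_ifs <;> simp_all [Fin.lt_def]

namespace Matrix

variable {R : Type*} [CommRing R] {k : ℕ}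

theorem det_succ_row_zero_eq_add (M : Matrix (Fin (k + 1)) (Fin (k + 1)) R) {a b : Fin (k + 1)}
    (hab : a ≠ b) (h : ∀ j, j ≠ a → j ≠ b → M 0 j = 0) :
    M.det = (-1) ^ (a : ℕ) * M 0 a * (M.submatrix Fin.succ a.succAbove).det +
      (-1) ^ (b : ℕ) * M 0 b * (M.submatrix Fin.succ b.succAbove).det := by
  rw [det_succ_row_zero, Fintype.sum_eq_add a b hab]
  rintro j ⟨ha, hb⟩
  simp [h j ha hb]

theorem det_succ_column_zero_eq_single (M : Matrix (Fin (k + 1)) (Fin (k + 1)) R)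
    {i : Fin (k + 1)} (h : ∀ i', i' ≠ i → M i' 0 = 0) :
    M.det = (-1) ^ (i : ℕ) * M i 0 * (M.submatrix i.succAbove Fin.succ).det := by
  rw [det_succ_column_zero, Fintype.sum_eq_single i]
  intro i' hi'
  simp [h i' hi']

end Matrix

def caterpillarMatrix (R : Type*) [Ring R] (n : ℕ) : Matrix (Fin n) (Fin n) R :=
  of fun i j =>
    if ((i : ℕ) = 0 ∧ (j : ℕ) = 2) ∨ ((i : ℕ) = 1 ∧ (j : ℕ) = 2) ∨
        (2 ≤ (i : ℕ) ∧ (j : ℕ) = i + 1) then 1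
    else if ((j : ℕ) = 0 ∧ (i : ℕ) = 2) ∨ ((j : ℕ) = 1 ∧ (i : ℕ) = 2) ∨
        (2 ≤ (j : ℕ) ∧ (i : ℕ) = j + 1) then -1
    else 0

variable {R : Type*} [CommRing R]

/-- `x • 1 - B`, where `B` is the skew-symmetric matrix of the path `0 → 1 → ⋯ → m - 1`. -/
def pathCharMatrix (x : R) (m : ℕ) : Matrix (Fin m) (Fin m) R :=
  of fun i j =>
    if (i : ℕ) = j then x
    else if (j : ℕ) = i + 1 then -1
    else if (i : ℕ) = j + 1 then 1
    else 0

def caterpillarCharMatrix (x : R) (n : ℕ) : Matrix (Fin n) (Fin n) R :=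
  of fun i j =>
    if (i : ℕ) = j then x
    else if ((i : ℕ) = 0 ∧ (j : ℕ) = 2) ∨ ((i : ℕ) = 1 ∧ (j : ℕ) = 2) ∨
        (2 ≤ (i : ℕ) ∧ (j : ℕ) = i + 1) then -1
    else if ((j : ℕ) = 0 ∧ (i : ℕ) = 2) ∨ ((j : ℕ) = 1 ∧ (i : ℕ) = 2) ∨
        (2 ≤ (j : ℕ) ∧ (i : ℕ) = j + 1) then 1
    else 0

theorem charmatrix_caterpillarMatrix (n : ℕ) :
    (caterpillarMatrix R n).charmatrix = caterpillarCharMatrix X n := by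
  ext ⟨i, hi⟩ ⟨j, hj⟩ : 1
  simp only [charmatrix_apply, diagonal_apply, caterpillarMatrix, caterpillarCharMatrix, of_apply,
    Fin.ext_iff]
  split_ifs <;> first | omega | simp

section

variable (x : R) (m : ℕ)

theorem pathCharMatrix_submatrix_succ :
    (pathCharMatrix x (m + 1)).submatrix Fin.succ Fin.succ = pathCharMatrix x m := by
  ext ⟨i, hi⟩ ⟨j, hj⟩
  simp only [pathCharMatrix, submatrix_apply, of_apply, Fin.val_succ]
  grind

theorem det_pathCharMatrix_submatrix_succ_succAbove_one :
    ((pathCharMatrix x (m + 2)).submatrix Fin.succ (Fin.succAbove 1)).det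
      = (pathCharMatrix x m).det := by
  rw [det_succ_column_zero_eq_single _ (i := 0)]
  · have hminor : ((pathCharMatrix x (m + 2)).submatrix Fin.succ (Fin.succAbove 1)).submatrix
        (Fin.succAbove 0) Fin.succ = pathCharMatrix x m := by
      ext ⟨i, hi⟩ ⟨j, hj⟩
      simp only [pathCharMatrix, submatrix_apply, of_apply, Fin.val_succ, Fin.val_succAbove,
        Fin.val_zero, Fin.val_one]
      grind
    rw [hminor]
    simp [pathCharMatrix]
  · rintro ⟨i, hi⟩ h0
    simp only [ne_eq, Fin.ext_iff, Fin.val_zero] at h0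
    simp only [pathCharMatrix, submatrix_apply, of_apply, Fin.val_zero, Fin.val_succ,
      Fin.val_succAbove, Fin.val_one]
    grind

theorem det_pathCharMatrix_add_two :
    (pathCharMatrix x (m + 2)).det
      = x * (pathCharMatrix x (m + 1)).det + (pathCharMatrix x m).det := by
  rw [det_succ_row_zero_eq_add _ (a := 0) (b := 1) zero_ne_one, Fin.succAbove_zero,
    pathCharMatrix_submatrix_succ, det_pathCharMatrix_submatrix_succ_succAbove_one]
  · simp [pathCharMatrix]
  · rintro ⟨j, hj⟩ h0 h1
    simp only [ne_eq, Fin.ext_iff, Fin.val_zero, Fin.val_one] at h0 h1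
    simp only [pathCharMatrix, of_apply, Fin.val_zero]
    grind

theorem caterpillarCharMatrix_submatrix_succ :
    (caterpillarCharMatrix x (m + 3)).submatrix Fin.succ Fin.succ = pathCharMatrix x (m + 2) := by
  ext ⟨i, hi⟩ ⟨j, hj⟩
  simp only [caterpillarCharMatrix, pathCharMatrix, submatrix_apply, of_apply, Fin.val_succ]
  grind

theorem det_caterpillarCharMatrix_submatrix_succ_succAbove_two :
    ((caterpillarCharMatrix x (m + 3)).submatrix Fin.succ (Fin.succAbove 2)).det
      = -(x * (pathCharMatrix x m).det) := by
  set N := (caterpillarCharMatrix x (m + 3)).submatrix Fin.succ (Fin.succAbove 2)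
  -- rows and columns `1, 3, 4, …, n - 1`: the isolated vertex `1` beside the path `3 → ⋯ → n - 1`
  have hQ : (N.submatrix (Fin.succAbove 1) Fin.succ).det = x * (pathCharMatrix x m).det := by
    rw [det_succ_column_zero_eq_single _ (i := 0)]
    · have hminor : (N.submatrix (Fin.succAbove 1) Fin.succ).submatrix (Fin.succAbove 0) Fin.succ
          = pathCharMatrix x m := by
        ext ⟨i, hi⟩ ⟨j, hj⟩
        simp only [N, caterpillarCharMatrix, pathCharMatrix, submatrix_apply, of_apply,
          Fin.val_succ, Fin.val_succAbove, Fin.val_zero, Fin.val_one, Fin.val_two]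
        grind
      rw [hminor]
      simp only [N, caterpillarCharMatrix, submatrix_apply, of_apply, Fin.val_succ,
        Fin.val_succAbove, Fin.val_zero, Fin.val_one, Fin.val_two]
      norm_num
    · rintro ⟨i, hi⟩ h0
      simp only [ne_eq, Fin.ext_iff, Fin.val_zero] at h0
      simp only [N, caterpillarCharMatrix, submatrix_apply, of_apply, Fin.val_zero, Fin.val_succ,
        Fin.val_succAbove, Fin.val_one, Fin.val_two]
      grind
  rw [det_succ_column_zero_eq_single _ (i := 1), hQ]
  · simp only [N, caterpillarCharMatrix, submatrix_apply, of_apply, Fin.val_succ,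
      Fin.val_succAbove, Fin.val_zero, Fin.val_one, Fin.val_two]
    norm_num
  · rintro ⟨i, hi⟩ h1
    simp only [ne_eq, Fin.ext_iff, Fin.val_one] at h1
    simp only [N, caterpillarCharMatrix, submatrix_apply, of_apply, Fin.val_zero, Fin.val_succ,
      Fin.val_succAbove, Fin.val_two]
    grind

theorem det_caterpillarCharMatrix :
    (caterpillarCharMatrix x (m + 3)).det
      = x * (pathCharMatrix x (m + 2)).det + x * (pathCharMatrix x m).det := by
  rw [det_succ_row_zero_eq_add _ (a := 0) (b := 2)
      (Fin.ne_of_val_ne (by simp only [Fin.val_zero, Fin.val_two]; omega)),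
    Fin.succAbove_zero, caterpillarCharMatrix_submatrix_succ,
    det_caterpillarCharMatrix_submatrix_succ_succAbove_two]
  · simp only [caterpillarCharMatrix, of_apply, Fin.val_zero, Fin.val_two]
    norm_num
  · rintro ⟨j, hj⟩ h0 h2
    simp only [ne_eq, Fin.ext_iff, Fin.val_zero, Fin.val_two] at h0 h2
    simp only [caterpillarCharMatrix, of_apply, Fin.val_zero]
    grind

end

theorem det_pathCharMatrix_eq {x : R} {f : ℕ → R} (hf1 : f 1 = 1) (hf2 : f 2 = x)
    (hf : ∀ k, 2 ≤ k → f (k + 1) = x * f k + f (k - 1)) (m : ℕ) :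
    (pathCharMatrix x m).det = f (m + 1) := by
  induction m using Nat.twoStepInduction with
  | zero => simp [hf1]
  | one => simp [pathCharMatrix, hf2]
  | more m ih₀ ih₁ => rw [det_pathCharMatrix_add_two, ih₀, ih₁, hf (m + 2) le_add_self]; rfl

theorem charpoly_caterpillar (n : ℕ) (hn : 3 ≤ n)
    (f l : ℕ → Polynomial ℝ)
    (hf1 : f 1 = 1) (hf2 : f 2 = Polynomial.X)
    (hf : ∀ k, 2 ≤ k → f (k + 1) = Polynomial.X * f k + f (k - 1))
    (hl : ∀ k, 3 ≤ k → l (k - 1) = f k + f (k - 2)) :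
    (Matrix.of (fun i j : Fin n =>
      if (i.val = 0 ∧ j.val = 2) ∨ (i.val = 1 ∧ j.val = 2) ∨
         (2 ≤ i.val ∧ j.val = i.val + 1) then (1 : ℝ)
      else if (j.val = 0 ∧ i.val = 2) ∨ (j.val = 1 ∧ i.val = 2) ∨
              (2 ≤ j.val ∧ i.val = j.val + 1) then -1
      else 0) : Matrix (Fin n) (Fin n) ℝ).charpoly
      = Polynomial.X * l (n - 1) := by
  obtain ⟨m, rfl⟩ : ∃ m, n = m + 3 := ⟨n - 3, by omega⟩
  change (caterpillarMatrix ℝ (m + 3)).charpoly = _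
  rw [charpoly, charmatrix_caterpillarMatrix, det_caterpillarCharMatrix,
    det_pathCharMatrix_eq hf1 hf2 hf, det_pathCharMatrix_eq hf1 hf2 hf, hl (m + 3) le_add_self,
    mul_add]
  rfl
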